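/- arXiv:0903.3778 — 4 statements merged into one kernel-verified Lean document; each statement's English description precedes it below -/
import Mathlib

section
/- For any normed finitely generated ℤ-module (M,‖·‖), one has λ_ℚ(M,‖·‖) ≤ λ_ℤ(M,‖·‖) ≤ rk(M) · λ_ℚ(M,‖·‖). -/
open scoped TensorProduct

/-- `N` is a norm on the real vector space `V`. -/
def IsNorm {V : Type*} [AddCommGroup V] [Module ℝ V] (N : V → ℝ) : Prop :=
  (∀ v, N v = 0 ↔ v = 0) ∧ (∀ (r : ℝ) (v : V), N (r • v) = |r| * N v) ∧
    ∀ v w, N (v + w) ≤ N v + N w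

/-- `λ_ℚ(M, N)`: the infimum of all `l` such that some elements of `M` forming a
`ℚ`-basis of `M ⊗ ℚ` all have norm `≤ l`. -/
noncomputable def lambdaQ {M : Type*} [AddCommGroup M] (N : ℝ ⊗[ℤ] M → ℝ) : ℝ :=
  sInf {l | ∃ (n : ℕ) (e : Fin n → M),
    LinearIndependent ℚ (fun i => ((1 : ℚ) ⊗ₜ[ℤ] e i : ℚ ⊗[ℤ] M)) ∧
    Submodule.span ℚ (Set.range fun i => ((1 : ℚ) ⊗ₜ[ℤ] e i : ℚ ⊗[ℤ] M)) = ⊤ ∧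
    ∀ i, N ((1 : ℝ) ⊗ₜ[ℤ] e i) ≤ l}

/-- `λ_ℤ(M, N)`: the infimum of all `l` such that some elements of `M` whose images form
a free `ℤ`-basis of `M/M_tor` all have norm `≤ l`. -/
noncomputable def lambdaZ {M : Type*} [AddCommGroup M] (N : ℝ ⊗[ℤ] M → ℝ) : ℝ :=
  sInf {l | ∃ (n : ℕ) (e : Fin n → M),
    LinearIndependent ℤ
      (fun i => (Submodule.Quotient.mk (e i) : M ⧸ Submodule.torsion ℤ M)) ∧
    Submodule.span ℤ (Set.range fun i =>
      (Submodule.Quotient.mk (e i) : M ⧸ Submodule.torsion ℤ M)) = ⊤ ∧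
    ∀ i, N ((1 : ℝ) ⊗ₜ[ℤ] e i) ≤ l}

/-!
A `ℤ`-basis of `M/M_tor` stays a `ℚ`-basis of `ℚ ⊗ M`, because `M/M_tor` embeds into `ℚ ⊗ M`
and spans it; this gives `λ_ℚ ≤ λ_ℤ`.

Conversely, let `e₁, …, eₙ ∈ M` be a `ℚ`-basis of `ℚ ⊗ M` with `‖eᵢ‖ ≤ λ`. In the coordinates of
this basis `M/M_tor` becomes a lattice `Λ ⊆ ℚⁿ` containing `ℤⁿ`, and `Λ` has a triangular basis
with all entries in `[-1, 1]`: the last coordinates of `Λ` form a cyclic group `gℤ ∋ 1`, so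
`|g| ≤ 1`, and a vector of `Λ` with last coordinate `g` can be moved by `ℤⁿ` so that its other
coordinates lie in `[0, 1)`; the vectors of `Λ` with last coordinate `0` are handled by induction.
Each vector `∑ cᵢ eᵢ` of this basis, read in `ℝ ⊗ M`, has norm at most `∑ |cᵢ| ‖eᵢ‖ ≤ n λ`.
-/

open Submodule

namespace IsNorm

variable {V : Type*} [AddCommGroup V] [Module ℝ V] {N : V → ℝ}

def toSeminorm (hN : IsNorm N) : Seminorm ℝ V :=
  Seminorm.of N hN.2.2 fun r v => by rw [hN.2.1, Real.norm_eq_abs]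

theorem nonneg (hN : IsNorm N) (v : V) : 0 ≤ N v :=
  apply_nonneg hN.toSeminorm v

theorem sum_smul_le (hN : IsNorm N) {ι : Type*} (s : Finset ι) (c : ι → ℝ) (v : ι → V) :
    N (∑ i ∈ s, c i • v i) ≤ ∑ i ∈ s, |c i| * N (v i) := by
  refine (Finset.le_sum_of_subadditive hN.toSeminorm (map_zero _).le (map_add_le_add _) s _).trans
    (Finset.sum_le_sum fun i _ => (map_smul_eq_mul hN.toSeminorm _ _).le)

end IsNorm

theorem Submodule.exists_abs_le_one_eq_span_singleton {G : Submodule ℤ ℚ} (hG : G.FG)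
    (h1 : (1 : ℚ) ∈ G) : ∃ g : ℚ, |g| ≤ 1 ∧ G = span ℤ {g} := by
  let I : FractionalIdeal (nonZeroDivisors ℤ) ℚ := ⟨G, FractionalIdeal.isFractional_of_fg hG⟩
  obtain ⟨g, hg⟩ := (inferInstance : (I : Submodule ℤ ℚ).IsPrincipal)
  change G = span ℤ {g} at hg
  refine ⟨g, ?_, hg⟩
  obtain ⟨c, hc⟩ := mem_span_singleton.1 (hg ▸ h1)
  have hc0 : c ≠ 0 := by rintro rfl; simp at hc
  calc |g| ≤ |(c : ℚ)| * |g| :=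
        le_mul_of_one_le_left (abs_nonneg g) (by exact_mod_cast Int.one_le_abs hc0)
    _ = 1 := by rw [← abs_mul, ← zsmul_eq_mul, hc, abs_one]

section SnocZero

variable (R M : Type*) [Semiring R] [AddCommMonoid M] [Module R M] (r : ℕ)

def Fin.snocZeroLinearMap : (Fin r → M) →ₗ[R] (Fin (r + 1) → M) where
  toFun x := Fin.snoc x 0
  map_add' x y := by ext j; induction j using Fin.lastCases <;> simp
  map_smul' c x := by ext j; induction j using Fin.lastCases <;> simp

variable {R M r}

@[simp] theorem Fin.snocZeroLinearMap_apply (x : Fin r → M) :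
    Fin.snocZeroLinearMap R M r x = Fin.snoc x 0 := rfl

theorem Fin.snocZeroLinearMap_injective : Function.Injective (Fin.snocZeroLinearMap R M r) :=
  fun x y h => by simpa using congrArg Fin.init h

theorem Fin.snoc_single_zero (i : Fin r) (a : M) :
    (Fin.snoc (Pi.single i a) 0 : Fin (r + 1) → M) = Pi.single (Fin.castSucc i) a := by
  ext j; induction j using Fin.lastCases <;> simp [Pi.single_apply]

end SnocZero

theorem Submodule.mem_of_forall_single_mem_of_intValued {ι : Type*} [Fintype ι] [DecidableEq ι]
    {Λ : Submodule ℤ (ι → ℚ)} (hΛ : ∀ i, Pi.single i 1 ∈ Λ) {v : ι → ℚ}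
    (hv : ∀ i, ∃ k : ℤ, v i = k) : v ∈ Λ := by
  choose k hk using hv
  rw [← Finset.univ_sum_single v]
  refine sum_mem fun i _ => ?_
  rw [hk i, ← Int.smul_one_eq_cast, Pi.single_smul]
  exact smul_mem Λ (k i) (hΛ i)

theorem Submodule.exists_abs_le_one_sub_smul_last_eq_zero {r : ℕ}
    {Λ : Submodule ℤ (Fin (r + 1) → ℚ)} (hfg : Λ.FG) (hΛ : ∀ i, Pi.single i 1 ∈ Λ) :
    ∃ w ∈ Λ, (∀ i, |w i| ≤ 1) ∧ ∀ x ∈ Λ, ∃ c : ℤ, (x - c • w) (Fin.last r) = 0 := by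
  let π : (Fin (r + 1) → ℚ) →ₗ[ℤ] ℚ := LinearMap.proj (Fin.last r)
  obtain ⟨g, hg1, hg⟩ := exists_abs_le_one_eq_span_singleton (hfg.map π)
    ⟨_, hΛ (Fin.last r), by simp [π]⟩
  obtain ⟨w₀, hw₀, hw₀g⟩ : g ∈ Λ.map π := hg ▸ mem_span_singleton_self g
  let w : Fin (r + 1) → ℚ := Fin.snoc (fun i => Int.fract (w₀ i.castSucc)) g
  have hw : w ∈ Λ := by
    rw [← sub_sub_cancel w₀ w]
    refine sub_mem hw₀ (mem_of_forall_single_mem_of_intValued hΛ fun i => ?_)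
    induction i using Fin.lastCases with
    | last => exact ⟨0, by simp [w, ← hw₀g, π]⟩
    | cast i => exact ⟨⌊w₀ i.castSucc⌋, by simp [w, Int.self_sub_fract]⟩
  refine ⟨w, hw, fun i => ?_, fun x hx => ?_⟩
  · induction i using Fin.lastCases with
    | last => simpa [w] using hg1
    | cast i =>
      simpa [w, abs_of_nonneg (Int.fract_nonneg (w₀ i.castSucc))] using
        (Int.fract_lt_one (w₀ i.castSucc)).le
  · obtain ⟨c, hc⟩ := mem_span_singleton.1 (hg ▸ mem_map_of_mem (f := π) hx)
    have hcx : (c : ℚ) * g = x (Fin.last r) := by rw [← zsmul_eq_mul, hc]; rfl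
    exact ⟨c, by simp [w, hcx]⟩

theorem Submodule.exists_span_range_eq_abs_le_one (n : ℕ) (Λ : Submodule ℤ (Fin n → ℚ))
    (hfg : Λ.FG) (hΛ : ∀ i, Pi.single i 1 ∈ Λ) :
    ∃ f : Fin n → Fin n → ℚ, span ℤ (Set.range f) = Λ ∧ ∀ j i, |f j i| ≤ 1 := by
  induction n with
  | zero => exact ⟨Fin.elim0, Subsingleton.elim _ _, fun j => j.elim0⟩
  | succ r ih =>
    let ε := Fin.snocZeroLinearMap ℤ ℚ r
    obtain ⟨f', hf'span, hf'le⟩ := ih (Λ.comap ε)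
      (fg_of_fg_map_injective ε Fin.snocZeroLinearMap_injective (hfg.of_le (map_comap_le ε Λ)))
      fun i => by simpa [ε, Fin.snoc_single_zero] using hΛ i.castSucc
    obtain ⟨w, hw, hwle, hwlast⟩ := exists_abs_le_one_sub_smul_last_eq_zero hfg hΛ
    have hf'Λ : ∀ j, ε (f' j) ∈ Λ := fun j =>
      mem_comap.1 (hf'span ▸ subset_span (Set.mem_range_self j))
    refine ⟨Fin.snoc (fun j => ε (f' j)) w, le_antisymm ?_ fun x hx => ?_, fun j i => ?_⟩
    · refine span_le.2 (Set.range_subset_iff.2 fun j => ?_)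
      induction j using Fin.lastCases <;> simp [hw, hf'Λ]
    · obtain ⟨c, hc⟩ := hwlast x hx
      have hy : ε (Fin.init (x - c • w)) = x - c • w := by
        simpa [ε, ← hc] using Fin.snoc_init_self (x - c • w)
      have hinit : Fin.init (x - c • w) ∈ span ℤ (Set.range f') := by
        rw [hf'span, mem_comap, hy]
        exact sub_mem hx (smul_mem _ _ hw)
      have hy_mem := mem_map_of_mem (f := ε) hinit
      rw [map_span, ← Set.range_comp, hy] at hy_mem
      have hrange : Set.range (ε ∘ f') ⊆ Set.range (Fin.snoc (fun j => ε (f' j)) w) :=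
        Set.range_subset_iff.2 fun j => ⟨j.castSucc, by simp⟩
      rw [← sub_add_cancel x (c • w)]
      exact add_mem (span_mono hrange hy_mem) (smul_mem _ _ (subset_span ⟨Fin.last r, by simp⟩))
    · induction j using Fin.lastCases with
      | last => simpa using hwle i
      | cast j => induction i using Fin.lastCases <;> simp [ε, hf'le]

theorem exists_linearIndependent_span_eq_top_abs_le_one {L : Type*} [AddCommGroup L]
    [Module.Finite ℤ L] {n : ℕ} (φ : L →ₗ[ℤ] Fin n → ℚ) (hφ : Function.Injective φ)
    (hsingle : ∀ i, Pi.single i 1 ∈ LinearMap.range φ) :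
    ∃ x : Fin n → L, LinearIndependent ℤ x ∧ span ℤ (Set.range x) = ⊤ ∧
      ∀ j i, |φ (x j) i| ≤ 1 := by
  have hfg : (LinearMap.range φ).FG := by
    rw [← Submodule.map_top]; exact Module.Finite.fg_top.map φ
  obtain ⟨f, hspan, hle⟩ := exists_span_range_eq_abs_le_one n _ hfg hsingle
  choose x hx using fun j =>
    (hspan ▸ subset_span (Set.mem_range_self j) : f j ∈ LinearMap.range φ)
  have hfx : φ ∘ x = f := funext hx
  have hf : LinearIndependent ℤ f := by
    refine (LinearIndependent.iff_fractionRing ℤ ℚ).2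
      (linearIndependent_of_top_le_span_of_card_eq_finrank ?_ (by simp))
    rw [← span_span_of_tower ℤ, hspan, ← (Pi.basisFun ℚ (Fin n)).span_eq]
    exact span_mono (Set.range_subset_iff.2 fun i => by simpa using hsingle i)
  refine ⟨x, .of_comp φ (hfx ▸ hf), ?_, fun j i => hx j ▸ hle j i⟩
  apply map_injective_of_injective hφ
  rw [map_span, ← Set.range_comp, hfx, hspan, Submodule.map_top]

section BaseChange

variable (R K M : Type*) [CommRing R] [CommRing K] [Algebra R K] [IsFractionRing R K]
  [AddCommGroup M] [Module R M]

theorem ker_mk_one_eq_torsion : LinearMap.ker (TensorProduct.mk R K M 1) = torsion R M := by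
  ext m
  exact (IsLocalizedModule.eq_zero_iff (nonZeroDivisors R) _).trans (mem_torsion_iff m).symm

def quotTorsionToTensor : (M ⧸ torsion R M) →ₗ[R] K ⊗[R] M :=
  (torsion R M).liftQ (TensorProduct.mk R K M 1) (ker_mk_one_eq_torsion R K M).ge

variable {R K M}

@[simp] theorem quotTorsionToTensor_mk (m : M) :
    quotTorsionToTensor R K M (Submodule.Quotient.mk m) = 1 ⊗ₜ m := rfl

theorem quotTorsionToTensor_injective : Function.Injective (quotTorsionToTensor R K M) :=
  LinearMap.ker_eq_bot.1 (ker_liftQ_eq_bot' _ _ (ker_mk_one_eq_torsion R K M).symm)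

end BaseChange

theorem TensorProduct.one_tmul_eq_sum_algebraMap_smul {R K A M : Type*} [CommRing R] [CommRing K]
    [CommRing A] [Algebra R K] [Algebra K A] [Algebra R A] [IsScalarTower R K A]
    [AddCommGroup M] [Module R M] {ι : Type*} (s : Finset ι) (c : ι → K) (m : M) (v : ι → M)
    (h : (1 : K) ⊗ₜ[R] m = ∑ i ∈ s, c i • (1 : K) ⊗ₜ[R] v i) :
    (1 : A) ⊗ₜ[R] m = ∑ i ∈ s, algebraMap K A (c i) • (1 : A) ⊗ₜ[R] v i := by
  have := congrArg (TensorProduct.AlgebraTensorModule.rTensor R M (Algebra.linearMap K A)) h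
  simpa [map_sum, algebraMap_smul] using this

section Lambda

variable {M : Type*} [AddCommGroup M]

def lambdaQSet (N : ℝ ⊗[ℤ] M → ℝ) : Set ℝ :=
  {l | ∃ (n : ℕ) (e : Fin n → M),
    LinearIndependent ℚ (fun i => ((1 : ℚ) ⊗ₜ[ℤ] e i : ℚ ⊗[ℤ] M)) ∧
    Submodule.span ℚ (Set.range fun i => ((1 : ℚ) ⊗ₜ[ℤ] e i : ℚ ⊗[ℤ] M)) = ⊤ ∧
    ∀ i, N ((1 : ℝ) ⊗ₜ[ℤ] e i) ≤ l}

def lambdaZSet (N : ℝ ⊗[ℤ] M → ℝ) : Set ℝ :=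
  {l | ∃ (n : ℕ) (e : Fin n → M),
    LinearIndependent ℤ
      (fun i => (Submodule.Quotient.mk (e i) : M ⧸ Submodule.torsion ℤ M)) ∧
    Submodule.span ℤ (Set.range fun i =>
      (Submodule.Quotient.mk (e i) : M ⧸ Submodule.torsion ℤ M)) = ⊤ ∧
    ∀ i, N ((1 : ℝ) ⊗ₜ[ℤ] e i) ≤ l}

theorem lambdaQ_eq_sInf (N : ℝ ⊗[ℤ] M → ℝ) : lambdaQ N = sInf (lambdaQSet N) := rfl

theorem lambdaZ_eq_sInf (N : ℝ ⊗[ℤ] M → ℝ) : lambdaZ N = sInf (lambdaZSet N) := rfl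

theorem lambdaQSet_eq_univ [Subsingleton (ℚ ⊗[ℤ] M)] (N : ℝ ⊗[ℤ] M → ℝ) :
    lambdaQSet N = Set.univ :=
  Set.eq_univ_of_forall fun _ =>
    ⟨0, Fin.elim0, linearIndependent_empty_type, Subsingleton.elim _ _, (·.elim0)⟩

theorem lambdaZSet_eq_univ [Subsingleton (ℚ ⊗[ℤ] M)] (N : ℝ ⊗[ℤ] M → ℝ) :
    lambdaZSet N = Set.univ :=
  have : Subsingleton (M ⧸ torsion ℤ M) := (quotTorsionToTensor_injective (K := ℚ)).subsingleton
  Set.eq_univ_of_forall fun _ =>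
    ⟨0, Fin.elim0, linearIndependent_empty_type, Subsingleton.elim _ _, (·.elim0)⟩

theorem nonneg_of_mem_lambdaQSet [Nontrivial (ℚ ⊗[ℤ] M)] {N : ℝ ⊗[ℤ] M → ℝ} (hN : IsNorm N)
    {l : ℝ} (hl : l ∈ lambdaQSet N) : 0 ≤ l := by
  obtain ⟨n, e, -, hspan, hle⟩ := hl
  cases n with
  | zero => simp at hspan
  | succ n => exact (hN.nonneg _).trans (hle 0)

theorem lambdaZSet_nonempty [Module.Finite ℤ M] (N : ℝ ⊗[ℤ] M → ℝ) :
    (lambdaZSet N).Nonempty := by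
  let b := Module.finBasis ℤ (M ⧸ torsion ℤ M)
  obtain ⟨l, hl⟩ := (Set.finite_range fun i => N (1 ⊗ₜ[ℤ] (b i).out)).bddAbove
  refine ⟨l, _, fun i => (b i).out, ?_, ?_, fun i => hl (Set.mem_range_self i)⟩
  · simp only [Submodule.Quotient.mk_out]; exact b.linearIndependent
  · simp only [Submodule.Quotient.mk_out]; exact b.span_eq

theorem lambdaZSet_subset_lambdaQSet (N : ℝ ⊗[ℤ] M → ℝ) : lambdaZSet N ⊆ lambdaQSet N := by
  rintro l ⟨n, e, hli, hspan, hle⟩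
  let κ := quotTorsionToTensor ℤ ℚ M
  refine ⟨n, e, (LinearIndependent.iff_fractionRing ℤ ℚ).1
    (hli.map' κ (LinearMap.ker_eq_bot.2 quotTorsionToTensor_injective)), ?_, hle⟩
  have hrange : Set.range (TensorProduct.mk ℤ ℚ M 1) ⊆
      span ℤ (Set.range fun i => (1 : ℚ) ⊗ₜ[ℤ] e i) := by
    rintro _ ⟨m, rfl⟩
    have hm := mem_map_of_mem (f := κ) (hspan.ge (mem_top (x := Submodule.Quotient.mk m)))
    rwa [map_span, ← Set.range_comp] at hm
  refine eq_top_iff.2 ?_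
  calc ⊤ = span ℚ (Set.range (TensorProduct.mk ℤ ℚ M 1)) := by
        rw [← Set.image_univ, span_eq_top_of_isLocalizedModule ℚ (nonZeroDivisors ℤ) _ span_univ]
    _ ≤ span ℚ (span ℤ (Set.range fun i => (1 : ℚ) ⊗ₜ[ℤ] e i)) := span_mono hrange
    _ = span ℚ (Set.range fun i => (1 : ℚ) ⊗ₜ[ℤ] e i) := by rw [span_span_of_tower]

theorem finrank_mul_mem_lambdaZSet [Module.Finite ℤ M] {N : ℝ ⊗[ℤ] M → ℝ} (hN : IsNorm N)
    {l : ℝ} (hl : l ∈ lambdaQSet N) : (Module.finrank ℚ (ℚ ⊗[ℤ] M) : ℝ) * l ∈ lambdaZSet N := by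
  obtain ⟨n, e, hli, hspan, hle⟩ := hl
  let B := Module.Basis.mk hli hspan.ge
  have hB : ∀ i, B i = 1 ⊗ₜ[ℤ] e i := Module.Basis.mk_apply hli hspan.ge
  let κ := quotTorsionToTensor ℤ ℚ M
  let φ := (B.equivFun.toLinearMap.restrictScalars ℤ) ∘ₗ κ
  obtain ⟨x, hxli, hxspan, hxle⟩ := exists_linearIndependent_span_eq_top_abs_le_one φ
    (B.equivFun.injective.comp quotTorsionToTensor_injective)
    fun i => ⟨Submodule.Quotient.mk (e i), by
      change B.equivFun (1 ⊗ₜ[ℤ] e i) = _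
      ext j; simp [← hB, Pi.single_apply, eq_comm]⟩
  have hx : (fun j => Submodule.Quotient.mk (x j).out) = x :=
    funext fun j => Submodule.Quotient.mk_out _
  refine ⟨n, fun j => (x j).out, by rwa [hx], by rwa [hx], fun j => ?_⟩
  have hsum : (1 : ℚ) ⊗ₜ[ℤ] (x j).out = ∑ i, φ (x j) i • (1 : ℚ) ⊗ₜ[ℤ] e i := by
    rw [← quotTorsionToTensor_mk, Submodule.Quotient.mk_out, ← B.sum_equivFun (κ (x j))]
    simp only [hB]
    rfl
  rw [TensorProduct.one_tmul_eq_sum_algebraMap_smul _ _ _ _ hsum, Module.finrank_eq_card_basis B,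
    Fintype.card_fin]
  calc _ ≤ ∑ i, |algebraMap ℚ ℝ (φ (x j) i)| * N (1 ⊗ₜ[ℤ] e i) := hN.sum_smul_le _ _ _
    _ ≤ ∑ _i : Fin n, l := Finset.sum_le_sum fun i _ =>
        (mul_le_of_le_one_left (hN.nonneg _) (by rw [eq_ratCast]; exact_mod_cast hxle j i)).trans
          (hle i)
    _ = n * l := by simp

end Lambda

/-- `λ_ℚ(M) ≤ λ_ℤ(M) ≤ rk(M) · λ_ℚ(M)`. -/
theorem lambdaQ_le_lambdaZ_le_rank_mul_lambdaQ
    {M : Type*} [AddCommGroup M] [Module.Finite ℤ M]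
    (N : ℝ ⊗[ℤ] M → ℝ) (hN : IsNorm N) :
    lambdaQ N ≤ lambdaZ N ∧
      lambdaZ N ≤ (Module.finrank ℚ (ℚ ⊗[ℤ] M) : ℝ) * lambdaQ N := by
  rcases subsingleton_or_nontrivial (ℚ ⊗[ℤ] M) with hV | hV
  -- both sets are then all of `ℝ`, whose `sInf` is `0` by convention
  · simp [lambdaQ_eq_sInf, lambdaZ_eq_sInf, lambdaQSet_eq_univ, lambdaZSet_eq_univ]
  have hsub := lambdaZSet_subset_lambdaQSet N
  have hQ_bdd : BddBelow (lambdaQSet N) := ⟨0, fun _ hl => nonneg_of_mem_lambdaQSet hN hl⟩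
  refine ⟨csInf_le_csInf hQ_bdd (lambdaZSet_nonempty N) hsub, ?_⟩
  rw [lambdaQ_eq_sInf, ← smul_eq_mul, ← Real.sInf_smul_of_nonneg (Nat.cast_nonneg _)]
  exact csInf_le_csInf (hQ_bdd.mono hsub) ((lambdaZSet_nonempty N).mono hsub).smul_set
    (Set.smul_set_subset_iff.2 fun _ hl => finrank_mul_mem_lambdaZSet hN hl)
end

section
/- Let R = ⊕_{n≥0} Rₙ be a noetherian graded ring and h a positive integer. Then the Veronese subring R^{(h)} = ⊕_{n≥0} R_{nh} is noetherian and R is a finitely generated R^{(h)}-module. -/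
/-!
Since `A` is noetherian, its irrelevant ideal is generated by finitely many homogeneous elements
of positive degree; by induction on the degree these generate `A` as an algebra over `A₀`.
A homogeneous generator `x` satisfies `x ^ h ∈ A^{(h)}`, so it is integral over `A^{(h)}`, and
`A` is a finite `A^{(h)}`-module. The Artin–Tate lemma, applied to `A₀ ⊆ A^{(h)} ⊆ A`, then shows
that `A^{(h)}` is of finite type over the noetherian ring `A₀`, hence noetherian.
-/

theorem Algebra.FiniteType.of_finite_of_injective (R B C : Type*) [CommRing R] [CommRing B]
    [CommRing C] [Algebra R B] [Algebra B C] [Algebra R C] [IsScalarTower R B C]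
    [IsNoetherianRing R] [Algebra.FiniteType R C] [Module.Finite B C]
    (hinj : Function.Injective (algebraMap B C)) : Algebra.FiniteType R B :=
  ⟨fg_of_fg_of_fg R B C Algebra.FiniteType.out Module.Finite.fg_top hinj⟩

namespace GradedRing

variable {A σ : Type*} [CommRing A] [SetLike σ A] [AddSubgroupClass σ A] (𝒜 : ℕ → σ)
  [GradedRing 𝒜]

theorem adjoin_eq_top_of_irrelevant_le_span {s : Set A} (hs : s ⊆ ⋃ i > 0, (𝒜 i : Set A))
    (hspan : (HomogeneousIdeal.irrelevant 𝒜).toIdeal ≤ Ideal.span s) :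
    Algebra.adjoin (𝒜 0) s = ⊤ := by
  classical
  suffices hmem : ∀ n, ∀ x ∈ 𝒜 n, x ∈ Algebra.adjoin (𝒜 0) s by
    refine eq_top_iff.mpr fun x _ => ?_
    rw [← DirectSum.sum_support_decompose 𝒜 x]
    exact sum_mem fun n _ => hmem n _ (SetLike.coe_mem _)
  intro n
  induction n using Nat.strong_induction_on with
  | _ n ih =>
  intro x hx
  rcases Nat.eq_zero_or_pos n with rfl | hn
  · exact Subalgebra.algebraMap_mem _ (⟨x, hx⟩ : 𝒜 0)
  obtain ⟨k, c, g, hcg⟩ :=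
    Submodule.mem_span_set'.mp (hspan (HomogeneousIdeal.mem_irrelevant_of_mem 𝒜 hn hx))
  have hx_eq : x = ∑ j, proj 𝒜 n (c j * g j) := by
    rw [← map_sum, ← DirectSum.decompose_of_mem_same 𝒜 hx, ← proj_apply]
    simp only [smul_eq_mul] at hcg
    rw [hcg]
  rw [hx_eq]
  refine sum_mem fun j _ => ?_
  obtain ⟨d, hd, hgd⟩ : ∃ d, 0 < d ∧ (g j : A) ∈ 𝒜 d := by simpa using hs (g j).2
  rw [proj_apply, DirectSum.coe_decompose_mul_of_right_mem 𝒜 n hgd]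
  split_ifs with hdn
  · exact mul_mem (ih _ (by omega) _ (SetLike.coe_mem _)) (Algebra.subset_adjoin (g j).2)
  · exact zero_mem _

theorem finiteType_of_isNoetherianRing [IsNoetherianRing A] : Algebra.FiniteType (𝒜 0) A := by
  have hfg : (Ideal.span (⋃ i > 0, (𝒜 i : Set A))).FG := by
    rw [← HomogeneousIdeal.irrelevant_eq_span]
    exact IsNoetherian.noetherian _
  obtain ⟨s, hs, hspan⟩ := (Submodule.fg_span_iff_fg_span_finset_subset _).mp hfg
  exact ⟨⟨s, adjoin_eq_top_of_irrelevant_le_span 𝒜 hs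
    ((HomogeneousIdeal.irrelevant_eq_span 𝒜).trans hspan).le⟩⟩

-- Instance search misses this: the `ℤ`-action on `𝒜 0` is the one induced from `A`.
instance : IsScalarTower ℤ (𝒜 0) A :=
  ⟨fun n x y => show ((n • x : 𝒜 0) : A) * y = n • ((x : A) * y) by
    rw [AddSubgroupClass.coe_zsmul, smul_mul_assoc]⟩

def veronese (h : ℕ) : Subalgebra (𝒜 0) A :=
  Algebra.adjoin (𝒜 0) (⋃ n, (𝒜 (h * n) : Set A))

variable {𝒜} {h : ℕ}

theorem restrictScalars_veronese :
    (veronese 𝒜 h).restrictScalars ℤ = Algebra.adjoin ℤ (⋃ n, (𝒜 (h * n) : Set A)) := by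
  rw [veronese, Algebra.Subalgebra.restrictScalars_adjoin, sup_eq_right]
  rintro _ ⟨x, rfl⟩
  exact Algebra.subset_adjoin (Set.mem_iUnion.mpr ⟨0, by simp⟩)

theorem isIntegral_veronese_of_mem (hh : 0 < h) {x : A} {i : ℕ} (hx : x ∈ 𝒜 i) :
    IsIntegral (veronese 𝒜 h) x := by
  have hpow : x ^ h ∈ veronese 𝒜 h := Algebra.subset_adjoin <|
    Set.mem_iUnion.mpr ⟨i, by simpa [mul_comm] using SetLike.pow_mem_graded h hx⟩
  exact IsIntegral.of_pow hh (isIntegral_algebraMap (x := (⟨_, hpow⟩ : veronese 𝒜 h)))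

theorem finite_veronese [Algebra.FiniteType (𝒜 0) A] (hh : 0 < h) :
    Module.Finite (veronese 𝒜 h) A := by
  obtain ⟨s, hs, hhom⟩ := GradedAlgebra.exists_finset_adjoin_eq_top_and_homogeneous 𝒜
  have hle : Algebra.adjoin (𝒜 0) (s : Set A) ≤
      (integralClosure (veronese 𝒜 h) A).restrictScalars (𝒜 0) :=
    Algebra.adjoin_le fun x hx => (hhom x hx).elim fun _ hi => isIntegral_veronese_of_mem hh hi
  have : Algebra.IsIntegral (veronese 𝒜 h) A := ⟨fun x => hle (hs ▸ Algebra.mem_top)⟩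
  have : Algebra.FiniteType (veronese 𝒜 h) A :=
    Algebra.FiniteType.of_restrictScalars_finiteType (𝒜 0) (veronese 𝒜 h) A
  exact Algebra.IsIntegral.finite (R := veronese 𝒜 h) (A := A)

end GradedRing

open GradedRing in
/-- Let `A = ⊕ₙ 𝒜 n` be a noetherian (commutative) graded ring and `h`
a positive integer.  Then the Veronese subring `A^{(h)} = ⊕ₙ 𝒜 (h·n)` (the subalgebra
generated by — equivalently, the sum of — the graded pieces of degree divisible by `h`)
is noetherian, and `A` is a finitely generated module over it. -/
theorem veronese_noetherian_and_finite
    {A : Type*} [CommRing A] (𝒜 : ℕ → Submodule ℤ A) [GradedRing 𝒜]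
    [IsNoetherianRing A] (h : ℕ) (hh : 0 < h) :
    IsNoetherianRing ↥(Algebra.adjoin ℤ (⋃ n : ℕ, (𝒜 (h * n) : Set A))) ∧
      Module.Finite ↥(Algebra.adjoin ℤ (⋃ n : ℕ, (𝒜 (h * n) : Set A))) A := by
  have : Algebra.FiniteType (𝒜 0) A := finiteType_of_isNoetherianRing 𝒜
  have hfin : Module.Finite (veronese 𝒜 h) A := finite_veronese hh
  have : Algebra.FiniteType (𝒜 0) (veronese 𝒜 h) :=
    Algebra.FiniteType.of_finite_of_injective (𝒜 0) (veronese 𝒜 h) A Subtype.val_injective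
  rw [← restrictScalars_veronese]
  exact ⟨Algebra.FiniteType.isNoetherianRing (𝒜 0) (veronese 𝒜 h), hfin⟩
end

section
/- With the metrized line bundle 𝒪(d) on ℙ¹_ℤ given by |s|_d(x:y) = |s(x,y)|/(max{α|x|, β|y|})^d where β, γ ∈ (0,1) and α = β^{1-1/γ}, any section s = Σ_{i=0}^d aᵢ X^i Y^{d-i} ∈ ℂ[X,Y]_d satisfies ‖s‖_sup ≥ √(Σ_{i=0}^d (|aᵢ|/(α^i β^{d-i}))²). -/
open Polynomial Finset

/-! By Parseval, the mean of `|p|²` over the unit circle is `∑ |cᵢ|²`, so `|p(z)|² ≥ ∑ |cᵢ|²` at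
some `|z| = 1`. Taking `y = 1` and `|x| = β / α`, where `max (α|x|) β = β`, gives a point at which
`|s|_d` is at least the right-hand side. The supremum is a genuine one, not the junk `sSup` of an
unbounded set, because `|s|_d ≤ ∑ |aᵢ| / (αⁱ β^(d-i))` everywhere. -/

theorem Polynomial.exists_norm_eq_one_sum_sq_norm_coeff_le (p : ℂ[X]) :
    ∃ z : ℂ, ‖z‖ = 1 ∧ ∑ i ∈ p.support, ‖p.coeff i‖ ^ 2 ≤ ‖p.eval z‖ ^ 2 := by
  have hcont : Continuous fun w : ℂ => ‖p.eval w‖ ^ 2 := by fun_prop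
  obtain ⟨z, hz, hmax⟩ := (isCompact_sphere (0 : ℂ) 1).exists_isMaxOn
    (NormedSpace.sphere_nonempty.2 zero_le_one) hcont.continuousOn
  refine ⟨z, by simpa using hz, ?_⟩
  rw [p.sum_sq_norm_coeff_eq_circleAverage]
  exact Real.circleAverage_mono_on_of_le_circle
    (hcont.continuousOn.circleIntegrable zero_le_one) fun w hw => hmax (by simpa using hw)

theorem exists_norm_eq_one_sum_sq_norm_le {n : ℕ} (c : Fin n → ℂ) :
    ∃ z : ℂ, ‖z‖ = 1 ∧ ∑ i, ‖c i‖ ^ 2 ≤ ‖∑ i, c i * z ^ (i : ℕ)‖ ^ 2 := by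
  classical
  set p := ofFn n c
  have hsupp : p.support ⊆ range n := fun i hi => by
    by_contra hin
    exact mem_support_iff.1 hi (ofFn_coeff_eq_zero_of_ge c (by simpa using hin))
  have hcoeff : ∑ i, ‖c i‖ ^ 2 = ∑ i ∈ p.support, ‖p.coeff i‖ ^ 2 := by
    rw [sum_subset hsupp fun i _ hi => by simp [notMem_support_iff.1 hi],
      ← Fin.sum_univ_eq_sum_range (fun i => ‖p.coeff i‖ ^ 2)]
    simp [p]
  have heval : ∀ z, p.eval z = ∑ i, c i * z ^ (i : ℕ) := fun z => by
    simp [p, ofFn_eq_sum_monomial, eval_finsetSum]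
  obtain ⟨z, hz, hle⟩ := p.exists_norm_eq_one_sum_sq_norm_coeff_le
  exact ⟨z, hz, hcoeff ▸ heval z ▸ hle⟩

theorem exists_norm_eq_sum_sq_norm_mul_pow_le {n : ℕ} (c : Fin n → ℂ) {r : ℝ} (hr : 0 ≤ r) :
    ∃ x : ℂ, ‖x‖ = r ∧ ∑ i, (‖c i‖ * r ^ (i : ℕ)) ^ 2 ≤ ‖∑ i, c i * x ^ (i : ℕ)‖ ^ 2 := by
  obtain ⟨z, hz, hle⟩ := exists_norm_eq_one_sum_sq_norm_le fun i => c i * (r : ℂ) ^ (i : ℕ)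
  refine ⟨r * z, by simp [hz, abs_of_nonneg hr], ?_⟩
  simpa [mul_pow, mul_assoc, abs_of_nonneg hr] using hle

theorem norm_sum_mul_pow_mul_pow_le {α β : ℝ} (hα : 0 < α) (hβ : 0 < β) {d : ℕ}
    (a : Fin (d + 1) → ℂ) (x y : ℂ) :
    ‖∑ i : Fin (d + 1), a i * x ^ (i : ℕ) * y ^ (d - (i : ℕ))‖ ≤
      (∑ i : Fin (d + 1), ‖a i‖ / (α ^ (i : ℕ) * β ^ (d - (i : ℕ)))) *
        max (α * ‖x‖) (β * ‖y‖) ^ d := by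
  set M := max (α * ‖x‖) (β * ‖y‖)
  refine (norm_sum_le _ _).trans ?_
  rw [sum_mul]
  refine sum_le_sum fun i _ => ?_
  calc ‖a i * x ^ (i : ℕ) * y ^ (d - (i : ℕ))‖
      = ‖a i‖ / (α ^ (i : ℕ) * β ^ (d - (i : ℕ))) *
          ((α * ‖x‖) ^ (i : ℕ) * (β * ‖y‖) ^ (d - (i : ℕ))) := by
        rw [norm_mul, norm_mul, norm_pow, norm_pow, mul_pow, mul_pow]
        field_simp
    _ ≤ ‖a i‖ / (α ^ (i : ℕ) * β ^ (d - (i : ℕ))) * M ^ d := by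
        rw [← pow_mul_pow_sub M i.is_le]
        gcongr
        exacts [le_max_left _ _, le_max_right _ _]

theorem supNorm_ge_l2_bound_general (β γ : ℝ) (hβ : β ∈ Set.Ioo (0 : ℝ) 1)
    (α : ℝ) (hα : α = β ^ (1 - 1 / γ))
    (d : ℕ) (a : Fin (d + 1) → ℂ) :
    Real.sqrt (∑ i : Fin (d + 1),
        (‖a i‖ / (α ^ (i : ℕ) * β ^ (d - (i : ℕ)))) ^ 2)
      ≤ sSup {t : ℝ | ∃ x y : ℂ, (x, y) ≠ 0 ∧
          t = ‖∑ i : Fin (d + 1), a i * x ^ (i : ℕ) * y ^ (d - (i : ℕ))‖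
                / (max (α * ‖x‖) (β * ‖y‖)) ^ d} := by
  obtain ⟨hβ0, -⟩ := hβ
  have hα0 : 0 < α := hα ▸ Real.rpow_pos_of_pos hβ0 _
  obtain ⟨x, hx, hle⟩ := exists_norm_eq_sum_sq_norm_mul_pow_le a (div_pos hβ0 hα0).le
  have hmax : max (α * ‖x‖) (β * ‖(1 : ℂ)‖) = β := by
    rw [hx, norm_one, mul_one, mul_div_cancel₀ _ hα0.ne', max_self]
  have hterm : ∀ i : Fin (d + 1), (‖a i‖ / (α ^ (i : ℕ) * β ^ (d - (i : ℕ)))) ^ 2 =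
      (‖a i‖ * (β / α) ^ (i : ℕ)) ^ 2 / (β ^ d) ^ 2 := by
    intro i
    rw [← pow_mul_pow_sub β i.is_le, div_pow β]
    field_simp
  refine le_csSup_of_le ⟨_, fun t ⟨u, v, _, ht⟩ => ht ▸ div_le_of_le_mul₀ (by positivity)
    (by positivity) (norm_sum_mul_pow_mul_pow_le hα0 hβ0 a u v)⟩ ⟨x, 1, by simp, rfl⟩ ?_
  rw [hmax, Real.sqrt_le_left (by positivity)]
  simp only [one_pow, mul_one, hterm, ← sum_div, div_pow _ (β ^ d)]
  gcongr

/-- On `ℙ¹_ℤ` with `𝒪(d)` metrized by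
`|s|_d(x:y) = |s(x,y)| / max(α|x|, β|y|)^d`, `β, γ ∈ (0,1)`, `α = β^{1-1/γ}`, every
section `s = ∑ aᵢ X^i Y^{d-i}` with complex coefficients satisfies
`‖s‖_sup ≥ √(∑ (|aᵢ|/(α^i β^{d-i}))²)`. -/
theorem supNorm_ge_l2_bound (β γ : ℝ) (hβ : β ∈ Set.Ioo (0 : ℝ) 1)
    (hγ : γ ∈ Set.Ioo (0 : ℝ) 1) (α : ℝ) (hα : α = β ^ (1 - 1 / γ))
    (d : ℕ) (a : Fin (d + 1) → ℂ) :
    Real.sqrt (∑ i : Fin (d + 1),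
        (‖a i‖ / (α ^ (i : ℕ) * β ^ (d - (i : ℕ)))) ^ 2)
      ≤ sSup {t : ℝ | ∃ x y : ℂ, (x, y) ≠ 0 ∧
          t = ‖∑ i : Fin (d + 1), a i * x ^ (i : ℕ) * y ^ (d - (i : ℕ))‖
                / (max (α * ‖x‖) (β * ‖y‖)) ^ d} :=
  supNorm_ge_l2_bound_general β γ hβ α hα d a
end

section
/- With the metric on 𝒪(d) over ℙ¹_ℤ given by |s|_d(x:y) = |s(x,y)|/(max{α|x|, β|y|})^d, β,γ ∈ (0,1), α = β^{1-1/γ}, the ℤ-span of the strictly small sections {s ∈ H⁰(ℙ¹_ℤ, 𝒪(d)) : ‖s‖_sup < 1} equals ⊕_{dγ < i ≤ d} ℤ·X^i Y^{d-i}, and the ℤ-span of {s : ‖s‖_sup ≤ 1} equals ⊕_{dγ ≤ i ≤ d} ℤ·X^i Y^{d-i}. -/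
/-!
The monomial `X^i Y^{d-i}` has sup norm exactly `α^{-i} β^{-(d-i)} = β^{i/γ - d}`, which is `< 1`
iff `i > dγ` and `≤ 1` iff `i ≥ dγ`. Conversely, on the torus `(α⁻¹ w : β⁻¹)`, `|w| = 1`, the
denominator of the metric is `1`, so a section becomes a polynomial in `w` with coefficients
`aᵢ α^{-i} β^{-(d-i)}`; averaging over `(d+1)`-st roots of unity extracts each coefficient, giving
`|a_j| α^{-j} β^{-(d-j)} ≤ ‖s‖_sup`. As a nonzero integer has absolute value `≥ 1`, a section of
norm `< 1` (resp. `≤ 1`) only involves monomials of norm `< 1` (resp. `≤ 1`).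
-/

/-- The supremum norm of the integral section `∑ aᵢ X^i Y^{d-i}` of `𝒪(d)` on `ℙ¹` for
the metric `|s|_d(x:y) = |s(x,y)| / max(α|x|, β|y|)^d`. -/
noncomputable def supNormO (α β : ℝ) (d : ℕ) (a : Fin (d + 1) → ℤ) : ℝ :=
  sSup {t : ℝ | ∃ x y : ℂ, (x, y) ≠ 0 ∧
    t = ‖∑ i : Fin (d + 1), (a i : ℂ) * x ^ (i : ℕ) * y ^ (d - (i : ℕ))‖
          / (max (α * ‖x‖) (β * ‖y‖)) ^ d}

open Finset

theorem IsPrimitiveRoot.sum_pow_div_pow_pow_eq_ite {K : Type*} [Field K] {ζ : K} {n : ℕ}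
    (hζ : IsPrimitiveRoot ζ n) (i j : Fin n) :
    ∑ k ∈ range n, (ζ ^ (i : ℕ) / ζ ^ (j : ℕ)) ^ k = if i = j then (n : K) else 0 := by
  have hζ0 : ζ ≠ 0 := hζ.ne_zero (Fin.pos i).ne'
  split_ifs with hij
  · simp [hij, div_self (pow_ne_zero _ hζ0)]
  · have hne : ζ ^ (i : ℕ) / ζ ^ (j : ℕ) ≠ 1 := by
      rw [Ne, div_eq_one_iff_eq (pow_ne_zero _ hζ0)]
      exact fun h => hij (Fin.ext (hζ.pow_inj i.isLt j.isLt h))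
    have hpow : (ζ ^ (i : ℕ) / ζ ^ (j : ℕ)) ^ n = 1 := by
      rw [div_pow, ← pow_mul, ← pow_mul, mul_comm (i : ℕ), mul_comm (j : ℕ), pow_mul, pow_mul,
        hζ.pow_eq_one, one_pow, one_pow, div_one]
    rw [geom_sum_eq hne, hpow, sub_self, zero_div]

theorem IsPrimitiveRoot.sum_inv_pow_mul_sum_mul_pow_eq {K : Type*} [Field K] {ζ : K} {n : ℕ}
    (hζ : IsPrimitiveRoot ζ n) (c : Fin n → K) (j : Fin n) :
    ∑ k ∈ range n, (ζ ^ (j : ℕ))⁻¹ ^ k * ∑ i, c i * (ζ ^ k) ^ (i : ℕ) = n * c j := by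
  calc _ = ∑ i, c i * ∑ k ∈ range n, (ζ ^ (i : ℕ) / ζ ^ (j : ℕ)) ^ k := by
        simp_rw [mul_sum]
        rw [sum_comm]
        refine sum_congr rfl fun i _ => sum_congr rfl fun k _ => ?_
        rw [div_eq_mul_inv, mul_pow, ← pow_mul, ← pow_mul, mul_comm k]
        ring
    _ = n * c j := by simp [hζ.sum_pow_div_pow_pow_eq_ite, mul_comm]

theorem norm_le_of_forall_norm_sum_mul_pow_le {n : ℕ} (c : Fin n → ℂ) {M : ℝ}
    (hM : ∀ w : ℂ, ‖w‖ = 1 → ‖∑ i, c i * w ^ (i : ℕ)‖ ≤ M) (j : Fin n) : ‖c j‖ ≤ M := by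
  have hn : n ≠ 0 := (Fin.pos j).ne'
  have hζ := Complex.isPrimitiveRoot_exp n hn
  set ζ := Complex.exp (2 * Real.pi * Complex.I / n)
  have hζ1 : ‖ζ‖ = 1 := hζ.norm'_eq_one hn
  have hnM : (n : ℝ) * ‖c j‖ ≤ n * M :=
    calc (n : ℝ) * ‖c j‖
        = ‖∑ k ∈ range n, (ζ ^ (j : ℕ))⁻¹ ^ k * ∑ i, c i * (ζ ^ k) ^ (i : ℕ)‖ := by
          rw [hζ.sum_inv_pow_mul_sum_mul_pow_eq, norm_mul, Complex.norm_natCast]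
      _ ≤ ∑ k ∈ range n, ‖∑ i, c i * (ζ ^ k) ^ (i : ℕ)‖ := by
          refine (norm_sum_le _ _).trans_eq (sum_congr rfl fun k _ => ?_)
          simp [hζ1]
      _ ≤ ∑ k ∈ range n, M := sum_le_sum fun k _ => hM _ (by simp [hζ1])
      _ = n * M := by simp
  exact le_of_mul_le_mul_left hnM (by positivity)

theorem span_eq_span_single_of_support {ι R : Type*} [Fintype ι] [DecidableEq ι] [Semiring R]
    (S : Set (ι → R)) (P : ι → Prop) (hsupp : ∀ a ∈ S, ∀ j, a j ≠ 0 → P j)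
    (hsingle : ∀ i, P i → Pi.single i 1 ∈ S) :
    Submodule.span R S = Submodule.span R {a | ∃ i, P i ∧ a = Pi.single i 1} := by
  refine le_antisymm (Submodule.span_le.2 fun a ha => ?_)
    (Submodule.span_mono fun _ ⟨i, hi, hb⟩ => hb ▸ hsingle i hi)
  rw [SetLike.mem_coe, pi_eq_sum_univ' a]
  refine Submodule.sum_mem _ fun j _ => ?_
  by_cases hj : a j = 0
  · simp [hj]
  · exact Submodule.smul_mem _ _ (Submodule.subset_span ⟨j, hsupp a ha j hj, rfl⟩)

section supNormO

variable {α β : ℝ} {d : ℕ}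

theorem norm_sum_div_max_pow_le (hα : 0 < α) (hβ : 0 < β) (a : Fin (d + 1) → ℤ) {x y : ℂ}
    (hxy : (x, y) ≠ 0) :
    ‖∑ i : Fin (d + 1), (a i : ℂ) * x ^ (i : ℕ) * y ^ (d - (i : ℕ))‖
        / (max (α * ‖x‖) (β * ‖y‖)) ^ d
      ≤ ∑ i : Fin (d + 1), |(a i : ℝ)| * (α⁻¹ ^ (i : ℕ) * β⁻¹ ^ (d - (i : ℕ))) := by
  set m := max (α * ‖x‖) (β * ‖y‖)
  have hm : 0 < m := by
    rcases not_and_or.1 (Prod.mk_eq_zero.not.1 hxy) with hx | hy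
    · exact lt_max_of_lt_left (mul_pos hα (norm_pos_iff.2 hx))
    · exact lt_max_of_lt_right (mul_pos hβ (norm_pos_iff.2 hy))
  have hx : ‖x‖ ≤ α⁻¹ * m := (le_inv_mul_iff₀ hα).2 (le_max_left _ _)
  have hy : ‖y‖ ≤ β⁻¹ * m := (le_inv_mul_iff₀ hβ).2 (le_max_right _ _)
  rw [div_le_iff₀ (pow_pos hm d), sum_mul]
  calc _ ≤ ∑ i : Fin (d + 1), |(a i : ℝ)| * (‖x‖ ^ (i : ℕ) * ‖y‖ ^ (d - (i : ℕ))) := by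
        refine (norm_sum_le _ _).trans_eq (sum_congr rfl fun i _ => ?_)
        simp [mul_assoc]
    _ ≤ ∑ i : Fin (d + 1), |(a i : ℝ)| * ((α⁻¹ * m) ^ (i : ℕ) * (β⁻¹ * m) ^ (d - (i : ℕ))) := by
        gcongr
    _ = _ := by
        refine sum_congr rfl fun i _ => ?_
        rw [mul_pow, mul_pow, ← pow_mul_pow_sub m i.is_le]
        ring

theorem le_supNormO (hα : 0 < α) (hβ : 0 < β) (a : Fin (d + 1) → ℤ) {x y : ℂ}
    (hxy : (x, y) ≠ 0) :
    ‖∑ i : Fin (d + 1), (a i : ℂ) * x ^ (i : ℕ) * y ^ (d - (i : ℕ))‖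
        / (max (α * ‖x‖) (β * ‖y‖)) ^ d ≤ supNormO α β d a :=
  le_csSup ⟨_, fun _ ⟨_, _, hxy, ht⟩ => ht ▸ norm_sum_div_max_pow_le hα hβ a hxy⟩
    ⟨x, y, hxy, rfl⟩

theorem supNormO_le (hα : 0 < α) (hβ : 0 < β) (a : Fin (d + 1) → ℤ) :
    supNormO α β d a ≤ ∑ i : Fin (d + 1), |(a i : ℝ)| * (α⁻¹ ^ (i : ℕ) * β⁻¹ ^ (d - (i : ℕ))) :=
  Real.sSup_le (fun _ ⟨_, _, hxy, ht⟩ => ht ▸ norm_sum_div_max_pow_le hα hβ a hxy)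
    (by positivity)

theorem abs_mul_le_supNormO (hα : 0 < α) (hβ : 0 < β) (a : Fin (d + 1) → ℤ) (j : Fin (d + 1)) :
    |(a j : ℝ)| * (α⁻¹ ^ (j : ℕ) * β⁻¹ ^ (d - (j : ℕ))) ≤ supNormO α β d a := by
  have key := norm_le_of_forall_norm_sum_mul_pow_le
    (fun i => (a i : ℂ) * ((α⁻¹ ^ (i : ℕ) * β⁻¹ ^ (d - (i : ℕ)) : ℝ) : ℂ))
    (M := supNormO α β d a) ?_ j
  · rwa [norm_mul, Complex.norm_intCast, Complex.norm_real, Real.norm_of_nonneg (by positivity)]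
      at key
  intro w hw
  have hsample := le_supNormO hα hβ a (x := (α : ℂ)⁻¹ * w) (y := (β : ℂ)⁻¹) (by simp [hβ.ne'])
  have hmax : max (α * ‖(α : ℂ)⁻¹ * w‖) (β * ‖(β : ℂ)⁻¹‖) = 1 := by
    simp [hw, abs_of_pos hα, abs_of_pos hβ, hα.ne', hβ.ne']
  rw [hmax, one_pow, div_one] at hsample
  convert hsample using 3 with i
  push_cast
  ring

theorem supNormO_single (hα : 0 < α) (hβ : 0 < β) (i : Fin (d + 1)) :
    supNormO α β d (Pi.single i 1) = α⁻¹ ^ (i : ℕ) * β⁻¹ ^ (d - (i : ℕ)) := by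
  refine le_antisymm ((supNormO_le hα hβ _).trans_eq ?_) ?_
  · rw [Fintype.sum_eq_single i fun j hj => by simp [Pi.single_eq_of_ne hj]]
    simp
  · simpa using abs_mul_le_supNormO hα hβ (Pi.single i 1) i

theorem inv_pow_mul_inv_pow_le_supNormO (hα : 0 < α) (hβ : 0 < β) {a : Fin (d + 1) → ℤ}
    {j : Fin (d + 1)} (hj : a j ≠ 0) :
    α⁻¹ ^ (j : ℕ) * β⁻¹ ^ (d - (j : ℕ)) ≤ supNormO α β d a :=
  (le_mul_of_one_le_left (by positivity) (by exact_mod_cast Int.one_le_abs hj)).trans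
    (abs_mul_le_supNormO hα hβ a j)

end supNormO

theorem inv_pow_mul_inv_pow_eq_rpow {α β γ : ℝ} (hβ : 0 < β) (hα : α = β ^ (1 - 1 / γ))
    {i d : ℕ} (hi : i ≤ d) : α⁻¹ ^ i * β⁻¹ ^ (d - i) = β ^ (i / γ - d) := by
  rw [hα, ← Real.rpow_neg_one, ← Real.rpow_neg_one β, ← Real.rpow_mul hβ.le,
    ← Real.rpow_mul_natCast hβ.le, ← Real.rpow_mul_natCast hβ.le, ← Real.rpow_add hβ,
    Nat.cast_sub hi]
  ring_nf

/-- On `ℙ¹_ℤ` with `𝒪(d)` metrized by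
`|s|_d(x:y) = |s(x,y)| / max(α|x|, β|y|)^d`, `β, γ ∈ (0,1)`, `α = β^{1-1/γ}`
(identifying `H⁰(ℙ¹_ℤ, 𝒪(d))` with coefficient vectors `a : Fin (d+1) → ℤ`), the
`ℤ`-span of the strictly small sections is `⊕_{dγ < i ≤ d} ℤ·X^iY^{d-i}`, and the
`ℤ`-span of the sections of norm `≤ 1` is `⊕_{dγ ≤ i ≤ d} ℤ·X^iY^{d-i}`. -/
theorem span_strictly_small_sections (β γ : ℝ) (hβ : β ∈ Set.Ioo (0 : ℝ) 1)
    (hγ : γ ∈ Set.Ioo (0 : ℝ) 1) (α : ℝ) (hα : α = β ^ (1 - 1 / γ)) (d : ℕ) :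
    Submodule.span ℤ {a : Fin (d + 1) → ℤ | supNormO α β d a < 1}
        = Submodule.span ℤ
            {a : Fin (d + 1) → ℤ | ∃ i : Fin (d + 1),
              (d : ℝ) * γ < (i : ℕ) ∧ a = Pi.single i 1} ∧
      Submodule.span ℤ {a : Fin (d + 1) → ℤ | supNormO α β d a ≤ 1}
        = Submodule.span ℤ
            {a : Fin (d + 1) → ℤ | ∃ i : Fin (d + 1),
              (d : ℝ) * γ ≤ (i : ℕ) ∧ a = Pi.single i 1} := by
  obtain ⟨hβ0, hβ1⟩ := hβ
  have hα0 : 0 < α := hα ▸ Real.rpow_pos_of_pos hβ0 _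
  have hweight (i : Fin (d + 1)) : α⁻¹ ^ (i : ℕ) * β⁻¹ ^ (d - (i : ℕ)) = β ^ ((i : ℕ) / γ - d) :=
    inv_pow_mul_inv_pow_eq_rpow hβ0 hα i.is_le
  have hlt (i : Fin (d + 1)) : β ^ ((i : ℕ) / γ - d) < 1 ↔ (d : ℝ) * γ < (i : ℕ) := by
    rw [← Real.rpow_zero β, Real.rpow_lt_rpow_left_iff_of_base_lt_one hβ0 hβ1, sub_pos,
      lt_div_iff₀ hγ.1]
  have hle (i : Fin (d + 1)) : β ^ ((i : ℕ) / γ - d) ≤ 1 ↔ (d : ℝ) * γ ≤ (i : ℕ) := by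
    rw [← Real.rpow_zero β, Real.rpow_le_rpow_left_iff_of_base_lt_one hβ0 hβ1, sub_nonneg,
      le_div_iff₀ hγ.1]
  refine ⟨span_eq_span_single_of_support _ _ (fun a ha j hj => ?_) (fun i hi => ?_),
    span_eq_span_single_of_support _ _ (fun a ha j hj => ?_) (fun i hi => ?_)⟩
  · exact (hlt j).1 (hweight j ▸ (inv_pow_mul_inv_pow_le_supNormO hα0 hβ0 hj).trans_lt ha)
  · exact (supNormO_single hα0 hβ0 i).trans_lt (hweight i ▸ (hlt i).2 hi)
  · exact (hle j).1 (hweight j ▸ (inv_pow_mul_inv_pow_le_supNormO hα0 hβ0 hj).trans ha)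
  · exact (supNormO_single hα0 hβ0 i).trans_le (hweight i ▸ (hle i).2 hi)
end
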